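/- arXiv:2605.03065 — 2 statements merged into one kernel-verified Lean document; each statement's English description precedes it below -/
import Mathlib

section
/- Let the bi-level MDP be constructed from an environment MDP with horizon-T trajectories and a K-step denoising chain per environment step, with rewards emitted only at inner index k = 0. Then for any policy on the bi-level MDP (with inner discount 1 and outer discount γ applied at each environment transition), the expected total discounted reward in the bi-level MDP equals the expected discounted return J(π) of the induced policy in the environment MDP. -/
/-- Bi-level MDP return equality: with a `K`-step denoising chain nested inside each environment
step, rewards emitted only at inner index `k = 0`, inner discount `1` and outer discount `γ`
applied at each environment transition, the expected total discounted reward of the bi-level MDP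
(computed from the bi-level joint distribution `B`) equals the discounted return `J(π)` of the
induced policy `π` in the environment MDP (computed from the environment occupancy `ρ`). -/
theorem stmt6 {S A : Type*} [Fintype S] [Fintype A]
    (γ : ℝ) (hγ : γ ∈ Set.Ioo (0 : ℝ) 1) (K T : ℕ) (hK : 0 < K)
    (P0 : S → ℝ) (hP0 : (∀ s, 0 ≤ P0 s) ∧ ∑ s, P0 s = 1)
    (P : S → A → S → ℝ) (hP : ∀ s a, (∀ s', 0 ≤ P s a s') ∧ ∑ s', P s a s' = 1)
    (R : S → A → ℝ)
    (ν : A → ℝ) (hν : (∀ a, 0 ≤ ν a) ∧ ∑ a, ν a = 1)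
    (f : ℕ → S → A → A → ℝ)
    (hf : ∀ k s a, (∀ a', 0 ≤ f k s a a') ∧ ∑ a', f k s a a' = 1)
    -- denoising marginals: `g s j` is the law of `a^{K-j}` started from the noise `ν` at `a^K`
    (g : S → ℕ → A → ℝ)
    (hg0 : ∀ s, g s 0 = ν)
    (hgsucc : ∀ s j a', g s (j + 1) a' = ∑ a, g s j a * f (K - j) s a a')
    -- induced environment policy: marginal of `a^0` after running the full chain
    (π : S → A → ℝ) (hπ : ∀ s a, π s a = g s K a)
    -- environment state occupancy
    (ρ : ℕ → S → ℝ) (hρ0 : ρ 0 = P0)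
    (hρsucc : ∀ t s', ρ (t + 1) s' = ∑ s, ∑ a, ρ t s * π s a * P s a s')
    -- bi-level joint distribution over (environment state, current denoising iterate), flat time
    (B : ℕ → S → A → ℝ)
    (hB0 : ∀ s a, B 0 s a = P0 s * ν a)
    (hBinner : ∀ n s a', n % (K + 1) < K →
      B (n + 1) s a' = ∑ a, B n s a * f (K - n % (K + 1)) s a a')
    (hBenv : ∀ n s' a', n % (K + 1) = K →
      B (n + 1) s' a' = ∑ s, ∑ a, B n s a * P s a s' * ν a') :
    ∑ t ∈ Finset.range T, γ ^ t * ∑ s, ∑ a, B (t * (K + 1) + K) s a * R s a =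
      ∑ t ∈ Finset.range T, γ ^ t * ∑ s, ∑ a, ρ t s * π s a * R s a := by
  have hmod : ∀ t j, j < K + 1 → (t * (K + 1) + j) % (K + 1) = j := by
    intro t j hj
    rw [Nat.add_comm, Nat.add_mul_mod_self_right, Nat.mod_eq_of_lt hj]
  have inner : ∀ t, (∀ s a, B (t * (K + 1)) s a = ρ t s * ν a) →
      ∀ j, j ≤ K → ∀ s a, B (t * (K + 1) + j) s a = ρ t s * g s j a := by
    intro t h0 j
    induction j with
    | zero => intro _ s a; simpa [hg0] using h0 s a
    | succ j ih =>
      intro hj s a'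
      have hjK : j < K := Nat.lt_of_succ_le hj
      have hm : (t * (K + 1) + j) % (K + 1) = j := hmod t j (by omega)
      have hstep : t * (K + 1) + (j + 1) = (t * (K + 1) + j) + 1 := by omega
      rw [hstep, hBinner _ s a' (by rw [hm]; exact hjK), hgsucc, Finset.mul_sum]
      refine Finset.sum_congr rfl fun a _ => ?_
      rw [ih (by omega) s a, hm]; ring
  have base : ∀ t s a, B (t * (K + 1)) s a = ρ t s * ν a := by
    intro t
    induction t with
    | zero => intro s a; simpa [hρ0] using hB0 s a
    | succ t ih =>
      intro s' a'
      have hstep : (t + 1) * (K + 1) = (t * (K + 1) + K) + 1 := by ring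
      have hm : (t * (K + 1) + K) % (K + 1) = K := hmod t K (by omega)
      rw [hstep, hBenv _ s' a' hm, hρsucc, Finset.sum_mul]
      refine Finset.sum_congr rfl fun s _ => ?_
      rw [Finset.sum_mul]
      refine Finset.sum_congr rfl fun a _ => ?_
      rw [inner t ih K le_rfl s a]
      rw [hπ]
  refine Finset.sum_congr rfl fun t _ => ?_
  congr 1
  refine Finset.sum_congr rfl fun s _ => Finset.sum_congr rfl fun a _ => ?_
  rw [inner t (base t) K le_rfl s a, hπ]
end

section
/- Let X solve the probability-flow ODE dX_τ/dτ = v(X_τ, τ) with marginal densities ρ_τ, and let X^SDE solve the SDE dX^SDE_τ = [v(X^SDE_τ, τ) + ε(τ) s(X^SDE_τ, τ)] dτ + √(2ε(τ)) dW_τ with the same initial distribution, where s(x,τ) = ∇_x log ρ_τ(x) is the score of the ODE marginals and ε(τ) ≥ 0. Then for every τ, the marginal distribution of X^SDE_τ equals that of X_τ. -/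
/-- Partial derivative of `f` at `x` in coordinate direction `i`. -/
noncomputable def pd {d : ℕ} (f : EuclideanSpace ℝ (Fin d) → ℝ)
    (x : EuclideanSpace ℝ (Fin d)) (i : Fin d) : ℝ :=
  fderiv ℝ f x (EuclideanSpace.single i 1)

/-- Divergence of a vector field. -/
noncomputable def divg {d : ℕ} (F : EuclideanSpace ℝ (Fin d) → EuclideanSpace ℝ (Fin d))
    (x : EuclideanSpace ℝ (Fin d)) : ℝ :=
  ∑ i, pd (fun y => F y i) x i

/-- Laplacian of a scalar field. -/
noncomputable def lap {d : ℕ} (f : EuclideanSpace ℝ (Fin d) → ℝ)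
    (x : EuclideanSpace ℝ (Fin d)) : ℝ :=
  ∑ i, pd (fun y => pd f y i) x i

/-- ODE-to-SDE marginal preservation (Fokker–Planck form): if `ρ` are the (smooth, positive)
marginal densities of the probability-flow ODE `dX/dτ = v(X,τ)` (i.e. `ρ` solves the continuity
equation), `s = ∇ log ρ` is their score, and `ρ'` are the marginal densities of the SDE
`dX = [v + ε s] dτ + √(2ε) dW` (i.e. `ρ'` solves the corresponding Fokker–Planck equation)
with the same initial distribution, then under uniqueness for the Fokker–Planck equation the
marginals agree: `ρ τ = ρ' τ` for every `τ`. -/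
theorem stmt12 {d : ℕ}
    (ρ ρ' : ℝ → EuclideanSpace ℝ (Fin d) → ℝ)
    (v : ℝ → EuclideanSpace ℝ (Fin d) → EuclideanSpace ℝ (Fin d))
    (ε : ℝ → ℝ) (hε : ∀ τ, 0 ≤ ε τ)
    (hρsmooth : ∀ τ, ContDiff ℝ (⊤ : ℕ∞) (ρ τ)) (hρpos : ∀ τ x, 0 < ρ τ x)
    (hvsmooth : ∀ τ, ContDiff ℝ (⊤ : ℕ∞) (v τ))
    (s : ℝ → EuclideanSpace ℝ (Fin d) → EuclideanSpace ℝ (Fin d))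
    (hs : ∀ τ x i, s τ x i = pd (fun y => Real.log (ρ τ y)) x i)
    -- continuity equation for the ODE marginals
    (hcont : ∀ τ x, HasDerivAt (fun u => ρ u x) (-(divg (fun y => ρ τ y • v τ y) x)) τ)
    -- Fokker–Planck equation for the SDE marginals
    (hFP : ∀ τ x, HasDerivAt (fun u => ρ' u x)
      (-(divg (fun y => ρ' τ y • (v τ y + ε τ • s τ y)) x) + ε τ * lap (ρ' τ) x) τ)
    -- same initial distribution
    (hinit : ρ 0 = ρ' 0)
    -- uniqueness for the Fokker–Planck equation
    (huniq : ∀ f g : ℝ → EuclideanSpace ℝ (Fin d) → ℝ,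
      (∀ τ x, HasDerivAt (fun u => f u x)
        (-(divg (fun y => f τ y • (v τ y + ε τ • s τ y)) x) + ε τ * lap (f τ) x) τ) →
      (∀ τ x, HasDerivAt (fun u => g u x)
        (-(divg (fun y => g τ y • (v τ y + ε τ • s τ y)) x) + ε τ * lap (g τ) x) τ) →
      f 0 = g 0 → f = g) :
    ∀ τ, ρ τ = ρ' τ := by
  have key : ∀ τ x, -(divg (fun y => ρ τ y • (v τ y + ε τ • s τ y)) x) + ε τ * lap (ρ τ) x
      = -(divg (fun y => ρ τ y • v τ y) x) := by
    intro τ x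
    have dρ : Differentiable ℝ (ρ τ) := (hρsmooth τ).differentiable (by simp)
    have hρs : ∀ y i, ρ τ y * s τ y i = pd (ρ τ) y i := by
      intro y i
      have h1 := (dρ y).hasFDerivAt.log (ne_of_gt (hρpos τ y))
      have h2 : pd (fun z => Real.log (ρ τ z)) y i
          = (ρ τ y)⁻¹ * pd (ρ τ) y i := by
        simp [pd, h1.fderiv]
      rw [hs τ y i, h2, ← mul_assoc, mul_inv_cancel₀ (ne_of_gt (hρpos τ y)), one_mul]
    have hfield : ∀ y i, (ρ τ y • (v τ y + ε τ • s τ y)) i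
        = ρ τ y * v τ y i + ε τ * pd (ρ τ) y i := by
      intro y i
      have h0 : (ρ τ y • (v τ y + ε τ • s τ y)) i = ρ τ y * (v τ y i + ε τ * s τ y i) := rfl
      rw [h0, mul_add, ← hρs y i]; ring
    have dpd : ∀ i, Differentiable ℝ (fun y => pd (ρ τ) y i) := by
      intro i
      have h := ((hρsmooth τ).fderiv_right (m := (⊤ : ℕ∞)) (by simp)).clm_apply
        (contDiff_const (c := EuclideanSpace.single i 1))
      exact h.differentiable (by simp)
    have dvi : ∀ i, Differentiable ℝ (fun y => v τ y i) := fun i =>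
      (EuclideanSpace.proj (𝕜 := ℝ) i).differentiable.comp ((hvsmooth τ).differentiable (by simp))
    have hdiv : divg (fun y => ρ τ y • (v τ y + ε τ • s τ y)) x
        = divg (fun y => ρ τ y • v τ y) x + ε τ * lap (ρ τ) x := by
      unfold divg lap
      rw [Finset.mul_sum, ← Finset.sum_add_distrib]
      refine Finset.sum_congr rfl fun i _ => ?_
      have heq : (fun y => (ρ τ y • (v τ y + ε τ • s τ y)) i)
           = fun y => ρ τ y * v τ y i + ε τ * pd (ρ τ) y i := funext fun y => hfield y i
      have da : DifferentiableAt ℝ (fun y => ρ τ y * v τ y i) x := (dρ x).mul (dvi i x)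
      have db : DifferentiableAt ℝ (fun y => pd (ρ τ) y i) x := dpd i x
      calc pd (fun y => (ρ τ y • (v τ y + ε τ • s τ y)) i) x i
          = pd (fun y => ρ τ y * v τ y i + ε τ * pd (ρ τ) y i) x i := by rw [heq]
        _ = pd (fun y => (ρ τ y • v τ y) i) x i + ε τ * pd (fun y => pd (ρ τ) y i) x i := by
            unfold pd
            unfold pd at db
            rw [fderiv_fun_add da (db.const_mul (ε τ)), fderiv_const_mul db]
            have : (fun y => (ρ τ y • v τ y) i) = fun y => ρ τ y * v τ y i := rfl
            rw [this]
            simp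
    rw [hdiv]; ring
  have hρFP : ∀ τ x, HasDerivAt (fun u => ρ u x)
      (-(divg (fun y => ρ τ y • (v τ y + ε τ • s τ y)) x) + ε τ * lap (ρ τ) x) τ := by
    intro τ x
    rw [key τ x]
    exact hcont τ x
  have hfin := huniq ρ ρ' hρFP hFP hinit
  intro τ
  rw [hfin]
end
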